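/- Let p : ℝ → ℝ³ be differentiable at t, let R : ℝ → M₃(ℝ) be differentiable at t with R(t) ∈ SO(3), and suppose the derivative satisfies R′(t) = R(t) [ω]× for some ω ∈ ℝ³ (body-frame angular velocity). Fix r, a ∈ ℝ³ and define the cable vector L⃗(s) := p(s) + R(s) r − a and the cable length L(s) := ‖L⃗(s)‖ (Euclidean norm). If L⃗(t) ≠ 0, then L is differentiable at t and L′(t) = ⟨L̂, p′(t)⟩ + ⟨(R(t) r) × L̂, R(t) ω⟩, where L̂ := L⃗(t)/L(t) is the unit cable vector and × is the cross product in ℝ³. -/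

import Mathlib

/-!
By the chain rule for `√`, the derivative of `‖L⃗‖` is `⟨L̂, L⃗′⟩`, where
`L⃗′ = p′ + R [ω]× r = p′ + R (ω × r)`. A rotation commutes with the cross product (it preserves
triple products, having determinant one), so `⟨L̂, R (ω × r)⟩ = ⟨L̂, R ω × R r⟩`, which by
cyclicity of the triple product is `⟨R r × L̂, R ω⟩`.
-/

open Matrix

/-- The skew-symmetric cross-product matrix `[ω]×` of `ω ∈ ℝ³`, so that
`[ω]× v = ω × v` for all `v ∈ ℝ³`. -/
def skew (ω : Fin 3 → ℝ) : Matrix (Fin 3) (Fin 3) ℝ :=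
  !![0, -ω 2, ω 1; ω 2, 0, -ω 0; -ω 1, ω 0, 0]

theorem skew_mulVec (ω v : Fin 3 → ℝ) : skew ω *ᵥ v = ω ⨯₃ v := by
  ext i
  fin_cases i <;> simp [skew, cross_apply, mulVec, dotProduct, Fin.sum_univ_three] <;> ring

theorem triple_product_mulVec {R : Type*} [CommRing R] (M : Matrix (Fin 3) (Fin 3) R)
    (u v w : Fin 3 → R) :
    (M *ᵥ u) ⬝ᵥ (M *ᵥ v) ⨯₃ (M *ᵥ w) = M.det * (u ⬝ᵥ v ⨯₃ w) := by
  have hrows : (![M *ᵥ u, M *ᵥ v, M *ᵥ w] : Matrix (Fin 3) (Fin 3) R) = of ![u, v, w] * Mᵀ := by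
    ext i j
    fin_cases i <;> simp [mul_apply, mulVec, dotProduct, mul_comm]
  rw [triple_product_eq_det, triple_product_eq_det, hrows, det_mul, det_transpose, mul_comm]
  rfl

theorem mulVec_cross_of_mem_specialOrthogonalGroup {R : Type*} [CommRing R]
    {M : Matrix (Fin 3) (Fin 3) R} (hM : M ∈ specialOrthogonalGroup (Fin 3) R) (u v : Fin 3 → R) :
    M *ᵥ (u ⨯₃ v) = (M *ᵥ u) ⨯₃ (M *ᵥ v) := by
  obtain ⟨horth, hdet⟩ := mem_specialOrthogonalGroup_iff.1 hM
  have hMMt : M * Mᵀ = 1 := (mem_orthogonalGroup_iff (Fin 3) R).1 horth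
  refine dotProduct_eq _ _ fun x => ?_
  calc M *ᵥ (u ⨯₃ v) ⬝ᵥ x = (Mᵀ *ᵥ x) ⬝ᵥ u ⨯₃ v := by
        rw [dotProduct_comm, dotProduct_mulVec, mulVec_transpose]
    _ = (M *ᵥ (Mᵀ *ᵥ x)) ⬝ᵥ (M *ᵥ u) ⨯₃ (M *ᵥ v) := by
        rw [triple_product_mulVec, hdet, one_mul]
    _ = (M *ᵥ u) ⨯₃ (M *ᵥ v) ⬝ᵥ x := by
        rw [mulVec_mulVec, hMMt, one_mulVec, dotProduct_comm]

theorem hasDerivAt_mulVec_of_hasDerivAt_apply {𝕜 m n : Type*} [NontriviallyNormedField 𝕜]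
    [Fintype m] [Fintype n] {M : 𝕜 → Matrix m n 𝕜} {M' : Matrix m n 𝕜} {t : 𝕜}
    (hM : ∀ i j, HasDerivAt (fun s => M s i j) (M' i j) t) (v : n → 𝕜) :
    HasDerivAt (fun s => M s *ᵥ v) (M' *ᵥ v) t :=
  hasDerivAt_pi.2 fun i => HasDerivAt.fun_sum fun j _ => (hM i j).mul_const (v j)

theorem HasDerivAt.sqrt_sum_sq {ι : Type*} [Fintype ι] {f : ℝ → ι → ℝ} {f' : ι → ℝ} {t : ℝ}
    (hf : HasDerivAt f f' t) (ht : f t ≠ 0) :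
    HasDerivAt (fun s => √(∑ i, f s i ^ 2)) ((√(∑ i, f t i ^ 2))⁻¹ • f t ⬝ᵥ f') t := by
  have hsum : HasDerivAt (fun s => ∑ i, f s i ^ 2) (2 * (f t ⬝ᵥ f')) t := by
    refine (HasDerivAt.fun_sum (u := Finset.univ) fun i _ =>
      (hasDerivAt_pi.1 hf i).fun_pow 2).congr_deriv ?_
    simp [dotProduct, Finset.mul_sum, mul_assoc]
  have hpos : ∑ i, f t i ^ 2 ≠ 0 := by
    simpa [dotProduct, sq] using dotProduct_self_eq_zero.not.2 ht
  convert hsum.sqrt hpos using 1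
  rw [smul_dotProduct, smul_eq_mul]
  field_simp

/-- **cable-length velocity, equation (4) of the paper.**
If `p` is differentiable at `t` with derivative `p′(t)`, `R` is differentiable at `t` with
`R(t) ∈ SO(3)` and `R′(t) = R(t) [ω]×`, and the cable vector
`L⃗(s) = p(s) + R(s) r − a` is nonzero at `t`, then the cable length `L(s) = ‖L⃗(s)‖`
is differentiable at `t` with
`L′(t) = ⟨L̂, p′(t)⟩ + ⟨(R(t) r) × L̂, R(t) ω⟩`, where `L̂ = L⃗(t)/L(t)`. -/
theorem cable_length_velocity
    (p : ℝ → Fin 3 → ℝ) (p' : Fin 3 → ℝ) (t : ℝ)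
    (hp : HasDerivAt p p' t)
    (R : ℝ → Matrix (Fin 3) (Fin 3) ℝ) (ω : Fin 3 → ℝ)
    (hSO : (R t)ᵀ * R t = 1 ∧ (R t).det = 1)
    (hR' : ∀ i k : Fin 3, HasDerivAt (fun s => R s i k) ((R t * skew ω) i k) t)
    (r a : Fin 3 → ℝ)
    (hne : p t + R t *ᵥ r - a ≠ 0) :
    let Lvec : ℝ → Fin 3 → ℝ := fun s => p s + R s *ᵥ r - a
    let Llen : ℝ → ℝ := fun s => Real.sqrt (∑ i, Lvec s i ^ 2)
    let Lhat : Fin 3 → ℝ := (Llen t)⁻¹ • Lvec t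
    HasDerivAt Llen (Lhat ⬝ᵥ p' + (crossProduct (R t *ᵥ r) Lhat) ⬝ᵥ (R t *ᵥ ω)) t := by
  intro Lvec Llen Lhat
  have hRt : R t ∈ specialOrthogonalGroup (Fin 3) ℝ :=
    ⟨(mem_orthogonalGroup_iff' (Fin 3) ℝ).2 hSO.1, hSO.2⟩
  have hLvec : HasDerivAt Lvec (p' + R t *ᵥ (ω ⨯₃ r)) t := by
    rw [← skew_mulVec, mulVec_mulVec]
    exact (hp.add (hasDerivAt_mulVec_of_hasDerivAt_apply hR' r)).sub_const a
  convert hLvec.sqrt_sum_sq hne using 1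
  rw [dotProduct_add, mulVec_cross_of_mem_specialOrthogonalGroup hRt, triple_product_permutation,
    dotProduct_comm (R t *ᵥ ω)]
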